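/- arXiv:1410.2182 — 6 statements merged into one kernel-verified Lean document; each statement's English description precedes it below -/
import Mathlib

section
/- For an odd prime p and integers r > s > 0, and any integer u coprime to p, the Euler quotients satisfy Q_r(u) ≡ Q_s(u) (mod p^s), where Q_t(u) is the unique residue modulo p^t with Q_t(u) ≡ (u^φ(p^t) − 1)/p^t (mod p^t). -/
/-!
Put `x = u ^ φ(p^s)` and `k = r - s`, so that `x ≡ 1 [MOD p^s]` and `u ^ φ(p^r) = x ^ p^k`.
The claim then says `x ^ p^k - 1 ≡ p^k (x - 1)` modulo `p^(2s+k)`, a second-order refinement of lifting the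
exponent. For `k = 1` write `x^p - 1 - p (x - 1) = (x - 1) (∑_{i<p} x^i - p)`: each
`x^i - 1 - i (x - 1)` is divisible by `(x - 1)^2`, and the remaining `(∑_{i<p} i) (x - 1)` by
`p^(s+1)` because `p ∣ p(p-1)/2` for odd `p`. Iterating this step gives the general case.
-/

/-- The Euler quotient `Q_t(u)`: the unique residue modulo `p^t` congruent to
`(u^{φ(p^t)} - 1)/p^t`, with value `0` when `gcd(u,p) > 1`. -/
def eulerQuotient (p t u : ℕ) : ℕ :=
  if Nat.Coprime u p then (u ^ (p ^ t).totient - 1) / p ^ t % p ^ t else 0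

open Finset

theorem Nat.dvd_sum_range_id_of_odd {m : ℕ} (hm : Odd m) : m ∣ ∑ i ∈ range m, i := by
  obtain ⟨j, rfl⟩ := hm
  refine ⟨j, ?_⟩
  rw [sum_range_id, Nat.add_sub_cancel, show (2 * j + 1) * (2 * j) = (2 * j + 1) * j * 2 by ring,
    Nat.mul_div_cancel _ two_pos]

theorem Nat.totient_prime_pow_add {p s : ℕ} (hp : p.Prime) (hs : 0 < s) (k : ℕ) :
    (p ^ (s + k)).totient = (p ^ s).totient * p ^ k := by
  obtain ⟨s, rfl⟩ := Nat.exists_eq_add_of_lt hs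
  rw [show 0 + s + 1 + k = s + k + 1 by omega, Nat.totient_prime_pow_succ hp,
    zero_add, Nat.totient_prime_pow_succ hp, pow_add]
  ring

section OddModulus

variable {R : Type*} [CommRing R] {m : ℕ}

theorem sub_one_sq_dvd_pow_sub_one_sub_mul (x : R) (i : ℕ) :
    (x - 1) ^ 2 ∣ x ^ i - 1 - i * (x - 1) := by
  simpa [mul_comm, sub_right_comm] using sq_dvd_add_pow_sub_sub (x - 1) 1 i

theorem pow_sub_one_sub_mul_eq (x : R) (n : ℕ) :
    x ^ n - 1 - n * (x - 1) =
      (x - 1) * (∑ i ∈ range n, (x ^ i - 1 - i * (x - 1)) + (∑ i ∈ range n, (i : R)) * (x - 1)) := by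
  rw [sum_sub_distrib, sum_sub_distrib, ← sum_mul]
  simp only [sum_const, card_range, nsmul_eq_mul, mul_one]
  linear_combination (-1 : R) * geom_sum_mul x n

theorem pow_sub_one_sub_mul_dvd (hm : Odd m) {n : ℕ} (hn : 0 < n) {x : R}
    (hx : (m : R) ^ n ∣ x - 1) :
    (m : R) ^ (2 * n + 1) ∣ x ^ m - 1 - m * (x - 1) := by
  rw [pow_sub_one_sub_mul_eq, show 2 * n + 1 = n + (n + 1) by omega, pow_add]
  refine mul_dvd_mul hx (dvd_add (dvd_sum fun i _ => ?_) ?_)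
  · calc (m : R) ^ (n + 1) ∣ ((m : R) ^ n) ^ 2 := by rw [← pow_mul]; exact pow_dvd_pow _ (by omega)
      _ ∣ (x - 1) ^ 2 := pow_dvd_pow_of_dvd hx 2
      _ ∣ _ := sub_one_sq_dvd_pow_sub_one_sub_mul x i
  · have hsum : (m : R) ∣ ((∑ i ∈ range m, i : ℕ) : R) :=
      Nat.cast_dvd_cast (Nat.dvd_sum_range_id_of_odd hm)
    rw [pow_succ', ← Nat.cast_sum]
    exact mul_dvd_mul hsum hx

theorem pow_pow_sub_one_sub_mul_dvd (hm : Odd m) {s : ℕ} (hs : 0 < s) {x : R}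
    (hx : (m : R) ^ s ∣ x - 1) (k : ℕ) :
    (m : R) ^ (2 * s + k) ∣ x ^ m ^ k - 1 - m ^ k * (x - 1) := by
  induction k with
  | zero => simp
  | succ k ih =>
    have hy : (m : R) ^ (s + k) ∣ x ^ m ^ k - 1 := by
      have hmk : (m : R) ^ (s + k) ∣ m ^ k * (x - 1) := by
        rw [add_comm, pow_add]
        exact mul_dvd_mul_left _ hx
      have h := dvd_add ((pow_dvd_pow (m : R) (show s + k ≤ 2 * s + k by omega)).trans ih) hmk
      rwa [sub_add_cancel] at h
    have hstep := (pow_dvd_pow (m : R) (show 2 * s + (k + 1) ≤ 2 * (s + k) + 1 by omega)).trans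
      (pow_sub_one_sub_mul_dvd hm (by omega) hy)
    have hlift : (m : R) ^ (2 * s + (k + 1)) ∣ m * (x ^ m ^ k - 1 - m ^ k * (x - 1)) := by
      rw [← add_assoc, pow_succ']
      exact mul_dvd_mul_left _ ih
    convert dvd_add hstep hlift using 1
    rw [pow_succ, pow_mul]
    ring

end OddModulus

theorem Nat.pow_pow_sub_one_div_modEq {m s x : ℕ} (hm : Odd m) (hs : 0 < s)
    (hx : x ≡ 1 [MOD m ^ s]) (k : ℕ) :
    (x ^ m ^ k - 1) / m ^ (s + k) ≡ (x - 1) / m ^ s [MOD m ^ s] := by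
  rcases Nat.eq_zero_or_pos x with rfl | hx0
  · rw [Nat.eq_one_of_dvd_one (Nat.modEq_zero_iff_dvd.mp hx.symm)]
    exact Nat.modEq_one
  have hxs : m ^ s ∣ x - 1 := (Nat.modEq_iff_dvd' hx0).mp hx.symm
  have key : x ^ m ^ k - 1 ≡ m ^ k * (x - 1) [MOD m ^ s * m ^ (s + k)] := by
    rw [Nat.modEq_iff_dvd, ← pow_add, show s + (s + k) = 2 * s + k by omega]
    push_cast [Nat.one_le_pow _ _ hx0, hx0]
    rw [← dvd_neg, neg_sub]
    refine pow_pow_sub_one_sub_mul_dvd hm hs ?_ k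
    have h := Int.natCast_dvd_natCast.mpr hxs
    rwa [Nat.cast_sub hx0, Nat.cast_pow, Nat.cast_one] at h
  have hmk : m ^ (s + k) ∣ m ^ k * (x - 1) := by
    rw [pow_add, mul_comm]; exact mul_dvd_mul_left _ hxs
  have hxk : m ^ (s + k) ∣ x ^ m ^ k - 1 := (key.dvd_iff (dvd_mul_left _ _)).mpr hmk
  refine Nat.ModEq.mul_right_cancel' (pow_ne_zero (s + k) hm.pos.ne') ?_
  have hB : (x - 1) / m ^ s * m ^ (s + k) = m ^ k * (x - 1) := by
    rw [pow_add, ← mul_assoc, Nat.div_mul_cancel hxs, mul_comm]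
  rwa [Nat.div_mul_cancel hxk, hB]

theorem eulerQuotient_modEq (p r s u : ℕ) (hp : p.Prime) (hodd : Odd p)
    (hs : 0 < s) (hrs : s < r) (hu : Nat.Coprime u p) :
    eulerQuotient p r u ≡ eulerQuotient p s u [MOD p ^ s] := by
  obtain ⟨k, rfl⟩ := Nat.exists_eq_add_of_le hrs.le
  have hx : u ^ (p ^ s).totient ≡ 1 [MOD p ^ s] := Nat.ModEq.pow_totient (hu.pow_right s)
  simp only [eulerQuotient, if_pos hu, Nat.totient_prime_pow_add hp hs, pow_mul]
  calc _ ≡ ((u ^ (p ^ s).totient) ^ p ^ k - 1) / p ^ (s + k) [MOD p ^ s] :=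
        Nat.ModEq.of_dvd (pow_dvd_pow p (Nat.le_add_right s k)) (Nat.mod_modEq _ _)
    _ ≡ (u ^ (p ^ s).totient - 1) / p ^ s [MOD p ^ s] := Nat.pow_pow_sub_one_div_modEq hodd hs hx k
    _ ≡ _ [MOD p ^ s] := (Nat.mod_modEq _ _).symm
end

section
/- Let p be an odd prime and r ≥ 1. Define H_{r−1}(u) for u coprime to p by H_{r−1}(u) ≡ (Q_r(u) − Q_{r−1}(u))/p^{r−1} (mod p) with 0 ≤ H_{r−1}(u) < p (where Q_0 = 0, so H_0 = Q_1 is the Fermat quotient), and H_{r−1}(u) = 0 if p | u. Then for all integers v coprime to p and all integers k, H_{r−1}(v + k p^r) ≡ H_{r−1}(v) − k v^{p−2} (mod p). -/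
open Classical in
/-- The Euler quotient `Q_t(u)` (integer version), zero when `u` is not coprime to `p`. -/
noncomputable def eulerQuotientZ (p t : ℕ) (u : ℤ) : ℤ :=
  if IsCoprime u (p : ℤ) then (u ^ (p ^ t).totient - 1) / (p : ℤ) ^ t % (p : ℤ) ^ t else 0

/-- The highest-level quotient `H_{r-1}(u) ≡ (Q_r(u) - Q_{r-1}(u))/p^{r-1} (mod p)`,
with `0 ≤ H_{r-1}(u) < p`; zero when `p ∣ u`.  (Note `Q_0 = 0`, so `H_0 = Q_1`.) -/
noncomputable def levelQuotientZ (p r : ℕ) (u : ℤ) : ℤ :=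
  (eulerQuotientZ p r u - eulerQuotientZ p (r - 1) u) / (p : ℤ) ^ (r - 1) % (p : ℤ)

/-!
Put `w = v + k p^r`. Since `p^t Q_t(u) ≡ u^φ(p^t) - 1 (mod p^(2t))`, the binomial theorem gives
`Q_t(u + p^t y) - Q_t(u) ≡ φ(p^t) u^(φ(p^t)-1) y (mod p^t)`. For `t = r - 1` and `y = k p`
the right side vanishes because `p^t ∣ φ(p^t) p`, so `Q_{r-1}(w) = Q_{r-1}(v)`. For `t = r` it is
`p^(r-1) (p - 1) v^(φ(p^r)-1) k ≡ -p^(r-1) k v^(p-2) (mod p^r)` by Fermat. So the numerator of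
`H_{r-1}` moves by `-p^(r-1) k v^(p-2)` modulo `p^r`, and dividing by `p^(r-1)` gives the claim.
-/

open Nat (totient)

theorem Int.ModEq.pow_totient {u : ℤ} {n : ℕ} (h : IsCoprime u n) :
    u ^ totient n ≡ 1 [ZMOD n] := by
  rw [← ZMod.intCast_eq_intCast_iff]
  have := congrArg Units.val (ZMod.pow_totient (ZMod.unitOfIsCoprime u h))
  rw [Units.val_pow_eq_pow_val, ZMod.coe_unitOfIsCoprime, Units.val_one] at this
  push_cast
  exact this

theorem Int.ediv_modEq_add_of_modEq {a b m n e : ℤ} (hm : m ≠ 0)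
    (h : a ≡ b + m * e [ZMOD m * n]) : a / m ≡ b / m + e [ZMOD n] := by
  obtain ⟨d, hd⟩ := Int.modEq_iff_dvd.1 h
  have ha : a = b + m * (e - n * d) := by linear_combination -hd
  rw [ha, Int.add_mul_ediv_left _ _ hm, Int.modEq_iff_dvd]
  exact ⟨d, by ring⟩

theorem Nat.pow_dvd_totient_prime_pow_mul_self {p : ℕ} (hp : p.Prime) (t : ℕ) :
    p ^ t ∣ totient (p ^ t) * p := by
  cases t with
  | zero => simp
  | succ s => exact ⟨p - 1, by rw [Nat.totient_prime_pow_succ hp]; ring⟩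

theorem Int.pow_totient_prime_pow_succ_sub_one_modEq {p : ℕ} (hp : p.Prime) {u : ℤ}
    (hu : IsCoprime u p) (s : ℕ) : u ^ (totient (p ^ (s + 1)) - 1) ≡ u ^ (p - 2) [ZMOD p] := by
  obtain ⟨a, ha⟩ : ∃ a, p ^ s = a + 1 :=
    ⟨p ^ s - 1, (Nat.sub_add_cancel (Nat.one_le_pow _ _ hp.pos)).symm⟩
  obtain ⟨b, rfl⟩ : ∃ b, p = b + 2 := ⟨p - 2, (Nat.sub_add_cancel hp.two_le).symm⟩
  have hexp : totient ((b + 2) ^ (s + 1)) - 1 = b + (b + 1) * a := by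
    rw [Nat.totient_prime_pow_succ hp, ha, show b + 2 - 1 = b + 1 from rfl,
      Nat.sub_eq_iff_eq_add (Nat.one_le_iff_ne_zero.2 (by positivity))]
    ring
  rw [hexp, pow_add, pow_mul]
  simpa using ((Int.ModEq.pow_card_sub_one_eq_one hp hu).pow a).mul_left (u ^ b)

section EulerQuotient

variable {p : ℕ}

theorem eulerQuotientZ_emod_pow (t : ℕ) (u : ℤ) :
    eulerQuotientZ p t u % (p : ℤ) ^ t = eulerQuotientZ p t u := by
  unfold eulerQuotientZ
  split_ifs <;> simp

theorem pow_mul_eulerQuotientZ_modEq (t : ℕ) {u : ℤ} (hu : IsCoprime u p) :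
    (p : ℤ) ^ t * eulerQuotientZ p t u ≡ u ^ totient (p ^ t) - 1
      [ZMOD (p : ℤ) ^ t * (p : ℤ) ^ t] := by
  have hdvd : (p : ℤ) ^ t ∣ u ^ totient (p ^ t) - 1 := by
    simpa using (Int.ModEq.pow_totient (n := p ^ t) (by simpa using hu.pow_right)).symm.dvd
  rw [eulerQuotientZ, if_pos hu]
  nth_rewrite 2 [← Int.mul_ediv_cancel' hdvd]
  exact (Int.mod_modEq _ _).mul_left'

theorem eulerQuotientZ_add_pow_mul_sub_modEq (hp : p ≠ 0) (t : ℕ) {u : ℤ} (y : ℤ)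
    (hu : IsCoprime u p) (hw : IsCoprime (u + (p : ℤ) ^ t * y) p) :
    eulerQuotientZ p t (u + (p : ℤ) ^ t * y) - eulerQuotientZ p t u ≡
      totient (p ^ t) * u ^ (totient (p ^ t) - 1) * y [ZMOD (p : ℤ) ^ t] := by
  set n := totient (p ^ t)
  set x := (p : ℤ) ^ t * y
  set P := (p : ℤ) ^ t
  apply Int.ModEq.mul_left_cancel' (pow_ne_zero t (Int.natCast_ne_zero.2 hp))
  have hbinom : u ^ n + u ^ (n - 1) * x * n ≡ (u + x) ^ n [ZMOD P * P] :=
    Int.modEq_iff_dvd.2 <| (dvd_trans ⟨y ^ 2, by ring⟩ (sq_dvd_add_pow_sub_sub x u n)).trans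
      (by rw [sub_sub, add_comm (u ^ n)])
  calc P * (eulerQuotientZ p t (u + x) - eulerQuotientZ p t u)
      = P * eulerQuotientZ p t (u + x) - P * eulerQuotientZ p t u := mul_sub _ _ _
    _ ≡ ((u + x) ^ n - 1) - (u ^ n - 1) [ZMOD P * P] :=
        (pow_mul_eulerQuotientZ_modEq t hw).sub (pow_mul_eulerQuotientZ_modEq t hu)
    _ ≡ (u ^ n + u ^ (n - 1) * x * n - 1) - (u ^ n - 1) [ZMOD P * P] :=
        (hbinom.symm.sub_right 1).sub_right _
    _ = P * (n * u ^ (n - 1) * y) := by ring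

theorem eulerQuotientZ_add_mul_pow_succ (hp : p.Prime) (t : ℕ) {u : ℤ} (k : ℤ)
    (hu : IsCoprime u p) :
    eulerQuotientZ p t (u + k * (p : ℤ) ^ (t + 1)) = eulerQuotientZ p t u := by
  set n := totient (p ^ t)
  have hx : k * (p : ℤ) ^ (t + 1) = (p : ℤ) ^ t * (p * k) := by ring
  have hw : IsCoprime (u + (p : ℤ) ^ t * (p * k)) p := by
    simpa [mul_left_comm] using hu.add_mul_left_left ((p : ℤ) ^ t * k)
  obtain ⟨c, hc⟩ := Nat.pow_dvd_totient_prime_pow_mul_self hp t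
  have hc' : (n : ℤ) * p = (p : ℤ) ^ t * c := by exact_mod_cast hc
  have hdvd : (p : ℤ) ^ t ∣ n * u ^ (n - 1) * (p * k) :=
    ⟨c * u ^ (n - 1) * k, by linear_combination u ^ (n - 1) * k * hc'⟩
  have hmod : eulerQuotientZ p t (u + (p : ℤ) ^ t * (p * k)) ≡ eulerQuotientZ p t u
      [ZMOD p ^ t] := by
    have h := eulerQuotientZ_add_pow_mul_sub_modEq hp.ne_zero t (p * k) hu hw
    simpa using (h.trans (Int.modEq_zero_iff_dvd.2 hdvd)).add_right (eulerQuotientZ p t u)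
  rw [hx]
  rwa [Int.ModEq, eulerQuotientZ_emod_pow, eulerQuotientZ_emod_pow] at hmod

theorem eulerQuotientZ_succ_add_mul_pow_succ_modEq (hp : p.Prime) (s : ℕ) {v : ℤ} (k : ℤ)
    (hv : IsCoprime v p) :
    eulerQuotientZ p (s + 1) (v + k * (p : ℤ) ^ (s + 1)) ≡
      eulerQuotientZ p (s + 1) v + (p : ℤ) ^ s * -(k * v ^ (p - 2)) [ZMOD (p : ℤ) ^ s * p] := by
  have hw : IsCoprime (v + (p : ℤ) ^ (s + 1) * k) p := by
    simpa [pow_succ, mul_assoc, mul_left_comm] using hv.add_mul_left_left ((p : ℤ) ^ s * k)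
  have h := eulerQuotientZ_add_pow_mul_sub_modEq hp.ne_zero (s + 1) k hv hw
  rw [← mul_comm k] at h
  set n := totient (p ^ (s + 1)) with hn
  set Q := eulerQuotientZ p (s + 1) v
  have htot : (n : ℤ) = (p : ℤ) ^ s * (p - 1) := by
    rw [hn, Nat.totient_prime_pow_succ hp]; push_cast [Nat.cast_sub hp.one_le]; ring
  have hfermat : ((p : ℤ) - 1) * v ^ (n - 1) * k ≡ -(k * v ^ (p - 2)) [ZMOD p] := by
    have hp1 : (p : ℤ) - 1 ≡ -1 [ZMOD p] := Int.modEq_iff_dvd.2 ⟨-1, by ring⟩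
    simpa [mul_comm k] using
      (hp1.mul (Int.pow_totient_prime_pow_succ_sub_one_modEq hp hv s)).mul_right k
  calc eulerQuotientZ p (s + 1) (v + k * (p : ℤ) ^ (s + 1))
      ≡ Q + n * v ^ (n - 1) * k [ZMOD (p : ℤ) ^ s * p] := by
        rw [← pow_succ]; simpa using h.add_left Q
    _ = Q + (p : ℤ) ^ s * ((p - 1) * v ^ (n - 1) * k) := by rw [htot]; ring
    _ ≡ Q + (p : ℤ) ^ s * -(k * v ^ (p - 2)) [ZMOD (p : ℤ) ^ s * p] :=
        hfermat.mul_left'.add_left _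

end EulerQuotient

theorem levelQuotientZ_shift_general (p r : ℕ) (hp : p.Prime) (hr : 1 ≤ r)
    (v : ℤ) (hv : IsCoprime v (p : ℤ)) (k : ℤ) :
    levelQuotientZ p r (v + k * (p : ℤ) ^ r) ≡
      levelQuotientZ p r v - k * v ^ (p - 2) [ZMOD (p : ℕ)] := by
  obtain ⟨s, rfl⟩ := Nat.exists_eq_add_of_le' hr
  set w := v + k * (p : ℤ) ^ (s + 1)
  have hQs : eulerQuotientZ p s w = eulerQuotientZ p s v :=
    eulerQuotientZ_add_mul_pow_succ hp s k hv
  have hQr : eulerQuotientZ p (s + 1) w ≡ _ [ZMOD _] :=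
    eulerQuotientZ_succ_add_mul_pow_succ_modEq hp s k hv
  have hdiv := Int.ediv_modEq_add_of_modEq (pow_ne_zero s (Int.natCast_ne_zero.2 hp.ne_zero))
    (a := eulerQuotientZ p (s + 1) w - eulerQuotientZ p s w)
    (b := eulerQuotientZ p (s + 1) v - eulerQuotientZ p s v) (e := -(k * v ^ (p - 2))) (by
      rw [hQs, sub_add_eq_add_sub]; exact hQr.sub_right _)
  rw [levelQuotientZ, levelQuotientZ, Nat.add_sub_cancel]
  calc _ ≡ _ [ZMOD p] := Int.mod_modEq _ _
    _ ≡ _ [ZMOD p] := hdiv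
    _ ≡ _ [ZMOD p] := by
      rw [← sub_eq_add_neg]; exact (Int.mod_modEq _ _).symm.sub_right _

theorem levelQuotientZ_shift (p r : ℕ) (hp : p.Prime) (hodd : Odd p) (hr : 1 ≤ r)
    (v : ℤ) (hv : IsCoprime v (p : ℤ)) (k : ℤ) :
    levelQuotientZ p r (v + k * (p : ℤ) ^ r) ≡
      levelQuotientZ p r v - k * v ^ (p - 2) [ZMOD (p : ℕ)] :=
  levelQuotientZ_shift_general p r hp hr v hv k
end

section
/- Let p be an odd prime and r ≥ 1. The sequence (H_{r−1}(u))_{u≥0} over Z/p has least period p^{r+1}; that is, H_{r−1}(u + p^{r+1}) = H_{r−1}(u) for all u, and no smaller positive period exists. -/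
/-- The highest-level quotient `H_{r-1}(u) = (Q_r(u) - Q_{r-1}(u))/p^{r-1} mod p`,
with values in `{0, …, p-1}`; zero when `p ∣ u`. -/
def levelQuotient (p r u : ℕ) : ℕ :=
  ((((eulerQuotient p r u : ℤ) - (eulerQuotient p (r - 1) u : ℤ)) / (p : ℤ) ^ (r - 1))
    % (p : ℤ)).toNat

/-!
Binomially, `(u + p^(t+1))^φ(p^t) ≡ u^φ(p^t) mod p^(2t)`, and `Q_t(u)` only depends on
`u^φ(p^t) mod p^(2t)`; hence every `Q_t` with `t ≤ r`, and with them `H_{r-1}`, has period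
`p^(r+1)`. The periods of a sequence are closed under `gcd`, so a smaller period would make `p^r`
a period. It is not one: `H_{r-1}(1) = 0`, whereas `Q_r(1 + p^r) = φ(p^r)` and
`Q_{r-1}(1 + p^r) = Q_{r-1}(1) = 0` give `H_{r-1}(1 + p^r) = p - 1`.
-/

open Function
open scoped Nat

theorem Function.Periodic.nat_mod {α : Type*} {f : ℕ → α} {m n : ℕ} (hm : Periodic f m)
    (hn : Periodic f n) : Periodic f (m % n) := fun x => by
  rw [← (hn.nat_mul (m / n)) (x + m % n), Nat.cast_id, add_assoc, Nat.mod_add_div', hm]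

theorem Function.Periodic.nat_gcd {α : Type*} {f : ℕ → α} {m n : ℕ} (hm : Periodic f m)
    (hn : Periodic f n) : Periodic f (m.gcd n) := by
  induction m, n using Nat.gcd.induction with
  | H0 n => rwa [Nat.gcd_zero_left]
  | H1 m n _ ih => rw [Nat.gcd_rec]; exact ih (hn.nat_mod hm) hm

theorem Function.Periodic.prime_pow_succ_le {α : Type*} {f : ℕ → α} {p k T : ℕ}
    (hp : p.Prime) (hf : Periodic f (p ^ (k + 1))) (hf' : ¬ Periodic f (p ^ k)) (hT : 0 < T)
    (hTf : Periodic f T) : p ^ (k + 1) ≤ T := by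
  by_contra! hlt
  obtain ⟨j, -, hj⟩ := (Nat.dvd_prime_pow hp).1 (Nat.gcd_dvd_right T (p ^ (k + 1)))
  have hjk : j < k + 1 := (Nat.pow_lt_pow_iff_right hp.one_lt).1 <|
    hj ▸ (Nat.gcd_le_left _ hT).trans_lt hlt
  obtain ⟨c, hc⟩ := pow_dvd_pow p (Nat.le_of_lt_succ hjk)
  apply hf'
  rw [hc, mul_comm, ← hj]
  exact (hTf.nat_gcd hf).nat_mul c

theorem Nat.add_pow_modEq (x s n : ℕ) :
    (x + s) ^ n ≡ x ^ n + x ^ (n - 1) * s * n [MOD s ^ 2] := by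
  rw [← Int.natCast_modEq_iff]
  push_cast
  refine (Int.modEq_iff_dvd.2 ?_).symm
  have h := sq_dvd_add_pow_sub_sub (s : ℤ) x n
  rwa [sub_sub, add_comm (_ * _ * _)] at h

theorem Nat.pred_div_mod_eq_of_modEq {a b q : ℕ} (ha : 0 < a) (hb : 0 < b)
    (h : a ≡ b [MOD q * q]) : (a - 1) / q % q = (b - 1) / q % q := by
  rw [← Nat.mod_mul_right_div_self, ← Nat.mod_mul_right_div_self]
  congr 1
  exact Nat.ModEq.add_right_cancel' 1 (by rwa [Nat.sub_add_cancel ha, Nat.sub_add_cancel hb])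

theorem Nat.coprime_add_pow_right_left {u p k : ℕ} (hk : k ≠ 0) :
    (u + p ^ k).Coprime p ↔ u.Coprime p := by
  rw [← Nat.succ_pred_eq_of_ne_zero hk, pow_succ, Nat.coprime_add_mul_right_left]

theorem Nat.pow_mul_pow_dvd_pow_succ_mul_totient {p : ℕ} (hp : p.Prime) (t : ℕ) :
    p ^ t * p ^ t ∣ p ^ (t + 1) * φ (p ^ t) := by
  cases t with
  | zero => simp
  | succ t => exact ⟨p - 1, by rw [Nat.totient_prime_pow_succ hp]; ring⟩

section EulerQuotient

variable {p t : ℕ}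

theorem eulerQuotient_eq_of_pow_modEq (hp : p ≠ 1) {u v : ℕ} (hu : u.Coprime p)
    (hv : v.Coprime p) (h : u ^ φ (p ^ t) ≡ v ^ φ (p ^ t) [MOD p ^ t * p ^ t]) :
    eulerQuotient p t u = eulerQuotient p t v := by
  have hne {w : ℕ} (hw : w.Coprime p) : w ≠ 0 := by
    rintro rfl
    exact hp ((Nat.coprime_zero_left p).1 hw)
  rw [eulerQuotient, eulerQuotient, if_pos hu, if_pos hv]
  exact Nat.pred_div_mod_eq_of_modEq (pow_pos (Nat.pos_of_ne_zero (hne hu)) _)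
    (pow_pos (Nat.pos_of_ne_zero (hne hv)) _) h

theorem eulerQuotient_periodic (hp : p.Prime) (t : ℕ) :
    Periodic (eulerQuotient p t) (p ^ (t + 1)) := by
  intro u
  have hcop : (u + p ^ (t + 1)).Coprime p ↔ u.Coprime p :=
    Nat.coprime_add_pow_right_left t.succ_ne_zero
  by_cases hu : u.Coprime p
  · refine eulerQuotient_eq_of_pow_modEq hp.one_lt.ne' (hcop.2 hu) hu ?_
    have hsq : p ^ t * p ^ t ∣ (p ^ (t + 1)) ^ 2 :=
      sq (p ^ (t + 1)) ▸ mul_dvd_mul (pow_dvd_pow p t.le_succ) (pow_dvd_pow p t.le_succ)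
    have hlin : p ^ t * p ^ t ∣ u ^ (φ (p ^ t) - 1) * p ^ (t + 1) * φ (p ^ t) := by
      rw [mul_assoc]
      exact (Nat.pow_mul_pow_dvd_pow_succ_mul_totient hp t).mul_left _
    simpa using ((Nat.add_pow_modEq u _ _).of_dvd hsq).trans
      ((Nat.modEq_zero_iff_dvd.2 hlin).add_left (u ^ φ (p ^ t)))
  · rw [eulerQuotient, eulerQuotient, if_neg hu, if_neg (mt hcop.1 hu)]

theorem eulerQuotient_periodic_of_lt (hp : p.Prime) {s : ℕ} (hts : t < s) :
    Periodic (eulerQuotient p t) (p ^ s) := by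
  simpa [pow_sub_mul_pow p hts] using (eulerQuotient_periodic hp t).nat_mul (p ^ (s - (t + 1)))

@[simp]
theorem eulerQuotient_one (p t : ℕ) : eulerQuotient p t 1 = 0 := by
  simp [eulerQuotient]

theorem eulerQuotient_one_add_pow (hp : p.Prime) (ht : 0 < t) :
    eulerQuotient p t (1 + p ^ t) = φ (p ^ t) := by
  have hq : 1 < p ^ t := Nat.one_lt_pow ht.ne' hp.one_lt
  have hcop : (1 + p ^ t).Coprime p :=
    (Nat.coprime_add_pow_right_left ht.ne').2 (Nat.coprime_one_left p)
  have hlin : (1 + p ^ t) ^ φ (p ^ t) ≡ 1 + φ (p ^ t) * p ^ t [MOD p ^ t * p ^ t] := by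
    simpa [← sq, mul_comm] using Nat.add_pow_modEq 1 (p ^ t) (φ (p ^ t))
  rw [eulerQuotient, if_pos hcop,
    Nat.pred_div_mod_eq_of_modEq (by positivity) (by positivity) hlin, Nat.add_sub_cancel_left,
    Nat.mul_div_cancel _ (by positivity),
    Nat.mod_eq_of_lt (Nat.totient_lt _ hq)]

end EulerQuotient

section LevelQuotient

variable {p r : ℕ}

theorem levelQuotient_periodic (hp : p.Prime) (r : ℕ) :
    Periodic (levelQuotient p r) (p ^ (r + 1)) := by
  intro u
  simp only [levelQuotient, eulerQuotient_periodic hp r u,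
    eulerQuotient_periodic_of_lt hp (show r - 1 < r + 1 by omega) u]

@[simp]
theorem levelQuotient_one (p r : ℕ) : levelQuotient p r 1 = 0 := by
  simp [levelQuotient]

theorem levelQuotient_one_add_pow (hp : p.Prime) (hr : 0 < r) :
    levelQuotient p r (1 + p ^ r) = p - 1 := by
  have hQ : eulerQuotient p (r - 1) (1 + p ^ r) = 0 := by
    rw [eulerQuotient_periodic_of_lt hp (Nat.sub_lt hr one_pos), eulerQuotient_one]
  have hp0 : (p : ℤ) ^ (r - 1) ≠ 0 := pow_ne_zero _ (Int.natCast_ne_zero.2 hp.ne_zero)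
  rw [levelQuotient, eulerQuotient_one_add_pow hp hr, hQ, Nat.totient_prime_pow hp hr]
  push_cast [hp.one_le]
  rw [sub_zero, Int.mul_ediv_cancel_left _ hp0,
    Int.emod_eq_of_lt (by linarith [hp.one_le]) (by linarith)]
  omega

end LevelQuotient

theorem levelQuotient_least_period_general (p r : ℕ) (hp : p.Prime) (hr : 1 ≤ r) :
    (∀ u : ℕ, levelQuotient p r (u + p ^ (r + 1)) = levelQuotient p r u) ∧
    (∀ T : ℕ, 0 < T → (∀ u : ℕ, levelQuotient p r (u + T) = levelQuotient p r u) →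
      p ^ (r + 1) ≤ T) := by
  refine ⟨levelQuotient_periodic hp r, fun T hT hTper => ?_⟩
  refine (levelQuotient_periodic hp r).prime_pow_succ_le hp (fun h => ?_) hT hTper
  have h1 := h 1
  rw [levelQuotient_one_add_pow hp hr, levelQuotient_one] at h1
  exact Nat.sub_ne_zero_of_lt hp.one_lt h1

/-- The sequence `(H_{r-1}(u))_{u ≥ 0}` has least period `p^{r+1}`. -/
theorem levelQuotient_least_period (p r : ℕ) (hp : p.Prime) (hodd : Odd p) (hr : 1 ≤ r) :
    (∀ u : ℕ, levelQuotient p r (u + p ^ (r + 1)) = levelQuotient p r u) ∧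
    (∀ T : ℕ, 0 < T → (∀ u : ℕ, levelQuotient p r (u + T) = levelQuotient p r u) →
      p ^ (r + 1) ≤ T) :=
  levelQuotient_least_period_general p r hp hr
end

section
/- Let p be an odd prime, r ≥ 1, and for each l ∈ {0,…,p−1} let D_l = {u : 0 ≤ u < p^{r+1}, gcd(u,p)=1, H_{r−1}(u)=l}. Then for every l, the map u ↦ u mod p^r from D_l to (Z/p^r)^* is a bijection; in particular |D_l| = p^{r−1}(p−1). -/
/-!
Write `u = v + k p^r` with `v < p^r` and `k < p`. The lower quotient `Q_{r-1}(u)` does not depend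
on `k`, and expanding `(v + k p^r)^φ(p^r)` to first order in `k p^r` gives
`H_{r-1}(v + k p^r) ≡ H_{r-1}(v) - k v⁻¹ (mod p)`. Hence, for a unit `v` modulo `p^r`, exactly one
digit `k` puts `v + k p^r` into `D_l`, and this lift inverts reduction modulo `p^r` on `D_l`.
-/

theorem Nat.Coprime.add_mul_pow {v p : ℕ} (hv : v.Coprime p) (k : ℕ) {r : ℕ} (hr : r ≠ 0) :
    (v + k * p ^ r).Coprime p := by
  rw [← Nat.coprime_pow_right_iff (Nat.pos_of_ne_zero hr)] at hv ⊢
  exact (Nat.coprime_add_mul_right_left v (p ^ r) k).mpr hv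

theorem ZMod.ncard_setOf_isUnit (n : ℕ) [NeZero n] : {x : ZMod n | IsUnit x}.ncard = n.totient := by
  rw [← Nat.card_coe_set_eq, ← ZMod.card_units_eq_totient, ← Nat.card_eq_fintype_card]
  exact Nat.card_congr Submonoid.unitsTypeEquivIsUnitSubmonoid.toEquiv.symm

theorem ZMod.natCast_eq_iff_of_lt {n a : ℕ} [NeZero n] (ha : a < n) (z : ZMod n) :
    (a : ZMod n) = z ↔ a = z.val :=
  ⟨fun h => h ▸ (ZMod.val_cast_of_lt ha).symm, fun h => h ▸ ZMod.natCast_zmod_val z⟩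

def eulerQuotientInt (p t u : ℕ) : ℤ := ((u : ℤ) ^ (p ^ t).totient - 1) / (p : ℤ) ^ t

section
variable {p r t u v : ℕ}

theorem pow_totient_eq_one_add_mul_eulerQuotientInt (hu : u.Coprime p) :
    (u : ℤ) ^ (p ^ t).totient = 1 + p ^ t * eulerQuotientInt p t u := by
  have h : (p : ℤ) ^ t ∣ (u : ℤ) ^ (p ^ t).totient - 1 := by
    exact_mod_cast (Nat.ModEq.pow_totient (hu.pow_right t)).symm.dvd
  rw [eulerQuotientInt, Int.mul_ediv_cancel' h]
  ring

theorem eulerQuotient_eq_emod (hp : p.Prime) (hu : u.Coprime p) :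
    (eulerQuotient p t u : ℤ) = eulerQuotientInt p t u % p ^ t := by
  have hu0 : u ≠ 0 := by
    rintro rfl
    exact hp.ne_one (Nat.coprime_zero_left p |>.mp hu)
  have hu1 : 1 ≤ u ^ (p ^ t).totient := Nat.one_le_pow _ _ (Nat.pos_of_ne_zero hu0)
  rw [eulerQuotient, if_pos hu, eulerQuotientInt]
  push_cast [hu1]
  rfl

theorem eulerQuotientInt_add_mul_pow_modEq (hp : p.Prime) (ht : t ≠ 0) (htr : t ≤ r)
    (hv : v.Coprime p) (k : ℕ) :
    eulerQuotientInt p t (v + k * p ^ r) ≡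
      eulerQuotientInt p t v + (p - 1) * v ^ ((p ^ t).totient - 1) * k * p ^ (r - 1)
      [ZMOD p ^ t] := by
  obtain ⟨z, hz⟩ := sq_dvd_add_pow_sub_sub ((k : ℤ) * p ^ r) (v : ℤ) (p ^ t).totient
  have hu := pow_totient_eq_one_add_mul_eulerQuotientInt (t := t)
    (hv.add_mul_pow k (r := r) (by omega))
  have hv' := pow_totient_eq_one_add_mul_eulerQuotientInt (t := t) hv
  have hφ : ((p ^ t).totient : ℤ) = p ^ (t - 1) * (p - 1) := by
    rw [Nat.totient_prime_pow hp (Nat.pos_of_ne_zero ht)]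
    push_cast [hp.one_le]
    ring
  have e1 : (p : ℤ) ^ (t - 1) * p ^ r = p ^ t * p ^ (r - 1) := by
    rw [← pow_add, ← pow_add]; congr 1; omega
  have e2 : ((p : ℤ) ^ r) ^ 2 = p ^ t * (p ^ t * p ^ (2 * r - 2 * t)) := by
    rw [← pow_mul, ← pow_add, ← pow_add]; congr 1; omega
  refine (Int.modEq_iff_add_fac.mpr ⟨k ^ 2 * p ^ (2 * r - 2 * t) * z, ?_⟩).symm
  refine mul_left_cancel₀ (pow_ne_zero t (Int.natCast_ne_zero.mpr hp.ne_zero)) ?_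
  push_cast at hu hz
  linear_combination -hu + hv' + hz + ((v : ℤ) ^ ((p ^ t).totient - 1) * k) * (p ^ r * hφ)
    + ((v : ℤ) ^ ((p ^ t).totient - 1) * k * (p - 1)) * e1 + (k ^ 2 * z) * e2

theorem eulerQuotient_sub_one_add_mul_pow (hp : p.Prime) (hv : v.Coprime p) (k : ℕ) :
    eulerQuotient p (r - 1) (v + k * p ^ r) = eulerQuotient p (r - 1) v := by
  rcases Nat.eq_zero_or_pos (r - 1) with hr | hr
  · simp [eulerQuotient, hr, Nat.mod_one]
  have hu := hv.add_mul_pow k (r := r) (by omega)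
  rw [← Int.natCast_inj, eulerQuotient_eq_emod hp hu, eulerQuotient_eq_emod hp hv]
  have hc : (p - 1) * v ^ ((p ^ (r - 1)).totient - 1) * k * p ^ (r - 1) ≡ 0 [ZMOD p ^ (r - 1)] :=
    Int.modEq_zero_iff_dvd.mpr (dvd_mul_left _ _)
  have := (eulerQuotientInt_add_mul_pow_modEq hp hr.ne' (Nat.sub_le r 1) hv k).trans
    (hc.add_left _)
  rwa [add_zero] at this

theorem natCast_levelQuotient [NeZero p] (r u : ℕ) :
    (levelQuotient p r u : ZMod p) =
      (((eulerQuotient p r u - eulerQuotient p (r - 1) u : ℤ) / p ^ (r - 1) : ℤ) : ZMod p) := by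
  rw [levelQuotient, ← Int.cast_natCast,
    Int.toNat_of_nonneg (Int.emod_nonneg _ (Int.natCast_ne_zero.mpr (NeZero.ne p))),
    ZMod.intCast_mod]

theorem levelQuotient_lt [NeZero p] (r u : ℕ) : levelQuotient p r u < p := by
  have hp : (0 : ℤ) < p := by exact_mod_cast Nat.pos_of_neZero p
  rw [levelQuotient, Int.toNat_lt (Int.emod_nonneg _ hp.ne')]
  exact Int.emod_lt_of_pos _ hp

theorem ZMod.pow_totient_prime_pow_sub_one [Fact p.Prime] (hr : r ≠ 0) {a : ZMod p}
    (ha : a ≠ 0) : a ^ ((p ^ r).totient - 1) = a⁻¹ := by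
  refine eq_inv_of_mul_eq_one_left ?_
  rw [pow_sub_one_mul (Nat.totient_pos.mpr (pow_pos (Fact.out : p.Prime).pos r)).ne',
    Nat.totient_prime_pow Fact.out (Nat.pos_of_ne_zero hr), mul_comm, pow_mul,
    ZMod.pow_card_sub_one_eq_one ha, one_pow]

theorem levelQuotient_add_mul_pow (hp : p.Prime) (hr : r ≠ 0) (hv : v.Coprime p) (k : ℕ) :
    (levelQuotient p r (v + k * p ^ r) : ZMod p) = levelQuotient p r v - k * (v : ZMod p)⁻¹ := by
  have := Fact.mk hp
  have hu := hv.add_mul_pow k hr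
  have hE : (eulerQuotient p r (v + k * p ^ r) : ℤ) ≡
      eulerQuotient p r v + (p - 1) * v ^ ((p ^ r).totient - 1) * k * p ^ (r - 1) [ZMOD p ^ r] := by
    rw [eulerQuotient_eq_emod hp hu, eulerQuotient_eq_emod hp hv]
    exact (Int.mod_modEq _ _).trans ((eulerQuotientInt_add_mul_pow_modEq hp hr le_rfl hv k).trans
      ((Int.mod_modEq _ _).symm.add_right _))
  obtain ⟨d, hd⟩ := Int.modEq_iff_add_fac.mp hE.symm
  have hpow : (p : ℤ) ^ r = p ^ (r - 1) * p := by rw [← pow_succ, Nat.sub_add_cancel (by omega)]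
  -- Floor division by `p^(r-1)` commutes with adding multiples of `p^(r-1)`, so no divisibility
  -- of `Q_r - Q_{r-1}` by `p^(r-1)` is needed.
  have hsplit : (eulerQuotient p r (v + k * p ^ r) - eulerQuotient p (r - 1) (v + k * p ^ r) : ℤ) =
      eulerQuotient p r v - eulerQuotient p (r - 1) v +
        p ^ (r - 1) * ((p - 1) * v ^ ((p ^ r).totient - 1) * k + p * d) := by
    rw [eulerQuotient_sub_one_add_mul_pow hp hv, hd, hpow]
    ring
  have hv0 : (v : ZMod p) ≠ 0 := (ZMod.unitOfCoprime v hv).ne_zero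
  rw [natCast_levelQuotient, natCast_levelQuotient, hsplit,
    Int.add_mul_ediv_left _ _ (pow_ne_zero _ (Int.natCast_ne_zero.mpr hp.ne_zero))]
  push_cast
  rw [ZMod.natCast_self, ZMod.pow_totient_prime_pow_sub_one hr hv0]
  ring

theorem levelQuotient_add_mul_pow_eq_iff (hp : p.Prime) (hr : r ≠ 0) (hv : v.Coprime p)
    {k l : ℕ} (hk : k < p) (hl : l < p) :
    levelQuotient p r (v + k * p ^ r) = l ↔
      k = (((levelQuotient p r v : ZMod p) - l) * v).val := by
  have := Fact.mk hp
  have hv0 : (v : ZMod p) ≠ 0 := (ZMod.unitOfCoprime v hv).ne_zero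
  have hl' := ZMod.natCast_eq_iff_of_lt (levelQuotient_lt r (v + k * p ^ r)) (l : ZMod p)
  rw [ZMod.val_cast_of_lt hl] at hl'
  rw [← hl', ← ZMod.natCast_eq_iff_of_lt hk, levelQuotient_add_mul_pow hp hr hv]
  constructor <;> intro h
  · field_simp at h
    linear_combination -h
  · rw [h]
    field_simp
    ring

theorem ZMod.val_coprime_of_isUnit (hr : r ≠ 0) {x : ZMod (p ^ r)} (hx : IsUnit x) :
    x.val.Coprime p :=
  (Nat.coprime_pow_right_iff (Nat.pos_of_ne_zero hr) _ _).mp (ZMod.val_coe_unit_coprime hx.unit)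

def levelQuotientFiber (p r l : ℕ) : Set ℕ :=
  {u | u < p ^ (r + 1) ∧ u.Coprime p ∧ levelQuotient p r u = l}

/-- The digit `k` solves `H_{r-1}(v) - k v⁻¹ = l` in `ZMod p`. -/
def levelQuotientLift (p r l : ℕ) (x : ZMod (p ^ r)) : ℕ :=
  x.val + (((levelQuotient p r x.val : ZMod p) - l) * x.val).val * p ^ r

theorem natCast_levelQuotientLift [NeZero p] (l : ℕ) (x : ZMod (p ^ r)) :
    (levelQuotientLift p r l x : ZMod (p ^ r)) = x := by
  simp [levelQuotientLift]

theorem mapsTo_natCast_levelQuotientFiber (l : ℕ) :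
    Set.MapsTo (fun u : ℕ => (u : ZMod (p ^ r))) (levelQuotientFiber p r l) {x | IsUnit x} :=
  fun u hu => (ZMod.isUnit_iff_coprime u (p ^ r)).mpr (hu.2.1.pow_right r)

theorem mapsTo_levelQuotientLift (hp : p.Prime) (hr : r ≠ 0) {l : ℕ} (hl : l < p) :
    Set.MapsTo (levelQuotientLift p r l) {x | IsUnit x} (levelQuotientFiber p r l) := by
  have := Fact.mk hp
  intro x hx
  have hv := ZMod.val_coprime_of_isUnit hr hx
  have hk : (((levelQuotient p r x.val : ZMod p) - l) * x.val).val < p := ZMod.val_lt _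
  refine ⟨?_, hv.add_mul_pow _ hr, (levelQuotient_add_mul_pow_eq_iff hp hr hv hk hl).mpr rfl⟩
  have := ZMod.val_lt x
  rw [levelQuotientLift, pow_succ]
  nlinarith

theorem leftInvOn_levelQuotientLift (hp : p.Prime) (hr : r ≠ 0) {l : ℕ} (hl : l < p) :
    Set.LeftInvOn (levelQuotientLift p r l) (fun u : ℕ => (u : ZMod (p ^ r)))
      (levelQuotientFiber p r l) := by
  have := Fact.mk hp
  intro u hu
  have hv := ZMod.val_coprime_of_isUnit hr (mapsTo_natCast_levelQuotientFiber l hu)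
  obtain ⟨hlt, -, hlu⟩ := hu
  have hdecomp : (u : ZMod (p ^ r)).val + u / p ^ r * p ^ r = u := by
    rw [ZMod.val_natCast, Nat.mod_add_div']
  have hk : u / p ^ r < p := Nat.div_lt_of_lt_mul (by rwa [← pow_succ])
  rw [← hdecomp, levelQuotient_add_mul_pow_eq_iff hp hr hv hk hl] at hlu
  rw [levelQuotientLift, ← hlu, hdecomp]

theorem bijOn_natCast_levelQuotientFiber (hp : p.Prime) (hr : r ≠ 0) {l : ℕ} (hl : l < p) :
    Set.BijOn (fun u : ℕ => (u : ZMod (p ^ r))) (levelQuotientFiber p r l) {x | IsUnit x} :=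
  have := Fact.mk hp
  Set.InvOn.bijOn ⟨leftInvOn_levelQuotientLift hp hr hl, fun x _ => natCast_levelQuotientLift l x⟩
    (mapsTo_natCast_levelQuotientFiber l) (mapsTo_levelQuotientLift hp hr hl)

end

theorem levelQuotient_fiber_bijOn_general (p r l : ℕ) (hp : p.Prime)
    (hr : 1 ≤ r) (hl : l < p) :
    let D : Finset ℕ := (Finset.range (p ^ (r + 1))).filter
      (fun u => Nat.Coprime u p ∧ levelQuotient p r u = l)
    Set.BijOn (fun u : ℕ => (u : ZMod (p ^ r))) ↑D {x : ZMod (p ^ r) | IsUnit x} ∧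
      D.card = p ^ (r - 1) * (p - 1) := by
  intro D
  have := Fact.mk hp
  have hD : (D : Set ℕ) = levelQuotientFiber p r l := by
    ext u
    simp [D, levelQuotientFiber]
  have hbij := hD ▸ bijOn_natCast_levelQuotientFiber hp (by omega) hl
  refine ⟨hbij, ?_⟩
  rw [← Set.ncard_coe_finset, hbij.ncard_eq, ZMod.ncard_setOf_isUnit, Nat.totient_prime_pow hp hr]

/-- For `D_l = {u : 0 ≤ u < p^{r+1}, gcd(u,p)=1, H_{r-1}(u)=l}`, reduction modulo `p^r`
is a bijection from `D_l` to `(ℤ/p^r)^*`; in particular `|D_l| = p^{r-1}(p-1)`. -/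
theorem levelQuotient_fiber_bijOn (p r l : ℕ) (hp : p.Prime) (hodd : Odd p)
    (hr : 1 ≤ r) (hl : l < p) :
    let D : Finset ℕ := (Finset.range (p ^ (r + 1))).filter
      (fun u => Nat.Coprime u p ∧ levelQuotient p r u = l)
    Set.BijOn (fun u : ℕ => (u : ZMod (p ^ r))) ↑D {x : ZMod (p ^ r) | IsUnit x} ∧
      D.card = p ^ (r - 1) * (p - 1) :=
  levelQuotient_fiber_bijOn_general p r l hp hr hl
end

section
/- Let p be an odd prime, r ≥ 2, l ∈ {0,…,p−1}, D_l = {u : 0 ≤ u < p^{r+1}, gcd(u,p)=1, H_{r−1}(u)=l}, and θ an element of an algebraic closure of F₂ with θ^p = 1. Then Σ_{u ∈ D_l} θ^u equals 0 if θ = 1 and equals 1 if θ ≠ 1. -/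
/-!
With `E(u) = (u ^ φ(p ^ r) - 1) / p ^ r`, expanding `(1 + p ^ (r - 1) E')^p` for the previous
quotient `E'` gives `E ≡ E' [MOD p ^ (r - 1)]`, so `H_{r-1}(u)` is the `p`-adic digit
`⌊E(u) / p ^ (r - 1)⌋ mod p`. Replacing `u` by `u + t p ^ r` adds `φ(p ^ r) t u ^ (φ - 1)` to `E(u)`
modulo `p ^ r`, hence `(p - 1) t u ^ (φ - 1)`, a unit multiple of `t`, to the digit. So every unit
`c` modulo `p ^ r` has exactly one lift in `D_l`, and as `θ ^ p ^ r = 1` the sum is `∑ θ ^ c` over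
those units: in characteristic `2` the full geometric sum `0` minus `p ^ (r - 1)` terms equal to `1`.
-/

open Finset

def unreducedEulerQuotient (p t u : ℕ) : ℕ :=
  (u ^ (p ^ t).totient - 1) / p ^ t

theorem Nat.div_mod_eq_of_modEq_add_mul {a b c n m : ℕ} (hn : n ≠ 0)
    (h : a ≡ b + n * c [MOD n * m]) : a / n % m = (b / n + c) % m := by
  rw [← Nat.mod_mul_right_div_self, h, Nat.mod_mul_right_div_self,
    Nat.add_mul_div_left _ _ (Nat.pos_of_ne_zero hn)]

theorem Nat.coprime_add_mul_pow_left_iff {p r : ℕ} (hr : r ≠ 0) (u t : ℕ) :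
    (u + t * p ^ r).Coprime p ↔ u.Coprime p := by
  rw [← pow_sub_one_mul hr, ← mul_assoc, Nat.coprime_add_mul_right_left]

section EulerQuotient

variable {p u : ℕ}

theorem pow_totient_eq_mul_unreducedEulerQuotient_add_one (hp : p ≠ 1) (hu : u.Coprime p)
    (t : ℕ) : u ^ (p ^ t).totient = p ^ t * unreducedEulerQuotient p t u + 1 := by
  have hu0 : u ≠ 0 := by
    rintro rfl
    exact hp (Nat.coprime_zero_left p |>.mp hu)
  have h1 : 1 ≤ u ^ (p ^ t).totient := Nat.one_le_pow _ _ (Nat.pos_of_ne_zero hu0)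
  have hdvd : p ^ t ∣ u ^ (p ^ t).totient - 1 :=
    (Nat.modEq_iff_dvd' h1).mp (Nat.ModEq.pow_totient (hu.pow_right t)).symm
  rw [unreducedEulerQuotient, Nat.mul_div_cancel' hdvd, Nat.sub_add_cancel h1]

theorem unreducedEulerQuotient_succ_modEq (hp : p.Prime) (hodd : Odd p) {s : ℕ} (hs : s ≠ 0)
    (hu : u.Coprime p) :
    unreducedEulerQuotient p (s + 1) u ≡ unreducedEulerQuotient p s u [MOD p ^ s] := by
  set E := unreducedEulerQuotient p s u
  have hp3 : 3 ≤ p := by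
    have := hp.two_le
    rcases hodd with ⟨k, rfl⟩
    omega
  have htot : (p ^ (s + 1)).totient = (p ^ s).totient * p := by
    rw [pow_succ', Nat.totient_mul_of_prime_of_dvd hp (dvd_pow_self p hs), mul_comm]
  have hdvd : p * p ^ s * p ^ s ∣ (p ^ s) ^ p := by
    rw [← pow_succ', ← pow_add, ← pow_mul]
    exact pow_dvd_pow p (by nlinarith [Nat.one_le_iff_ne_zero.mpr hs])
  -- `(1 + p ^ s E) ^ p = 1 + p ^ (s + 1) (E + p ^ s y)`: `p ^ (2 s + 1)` divides the higher terms
  obtain ⟨y, hy⟩ := ZMod.exists_one_add_mul_pow_prime_eq hp (dvd_refl (p ^ s)) hdvd E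
  have hmul : p ^ (s + 1) * unreducedEulerQuotient p (s + 1) u =
      p ^ (s + 1) * (E + p ^ s * y) := by
    have h := pow_totient_eq_mul_unreducedEulerQuotient_add_one hp.ne_one hu (s + 1)
    rw [htot, pow_mul, pow_totient_eq_mul_unreducedEulerQuotient_add_one hp.ne_one hu s,
      add_comm, hy, pow_succ'] at h
    rw [pow_succ']
    linarith
  rw [Nat.ModEq, Nat.eq_of_mul_eq_mul_left (pow_pos hp.pos _) hmul, Nat.add_mul_mod_self_left]

theorem levelQuotient_eq (hp : p.Prime) (hodd : Odd p) {r : ℕ} (hr : 2 ≤ r)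
    (hu : u.Coprime p) :
    levelQuotient p r u = unreducedEulerQuotient p r u / p ^ (r - 1) % p := by
  obtain ⟨s, rfl⟩ : ∃ s, r = s + 1 := ⟨r - 1, by omega⟩
  set Q := unreducedEulerQuotient p (s + 1) u % p ^ (s + 1)
  have hQ : eulerQuotient p (s + 1) u = Q := by rw [eulerQuotient, if_pos hu]; rfl
  have hQ' : eulerQuotient p s u = Q % p ^ s := by
    rw [eulerQuotient, if_pos hu, Nat.mod_mod_of_dvd _ (pow_dvd_pow p s.le_succ)]
    exact (unreducedEulerQuotient_succ_modEq hp hodd (by omega) hu).symm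
  have hsub : (Q : ℤ) - (Q % p ^ s : ℕ) = (p : ℤ) ^ s * (Q / p ^ s : ℕ) := by
    rw [← Nat.cast_sub (Nat.mod_le _ _), ← Nat.mul_div_self_eq_mod_sub_self]
    push_cast
    rfl
  have hlt : Q / p ^ s < p := by
    rw [Nat.div_lt_iff_lt_mul (pow_pos hp.pos s), ← pow_succ']
    exact Nat.mod_lt _ (pow_pos hp.pos _)
  rw [levelQuotient, Nat.add_sub_cancel, hQ, hQ', hsub,
    Int.mul_ediv_cancel_left _ (pow_ne_zero s (by exact_mod_cast hp.ne_zero)),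
    Int.emod_eq_of_lt (by positivity) (by exact_mod_cast hlt), Int.toNat_natCast,
    ← Nat.mod_mul_right_div_self, ← pow_succ]

theorem unreducedEulerQuotient_add_mul_pow_modEq (hp : p.Prime) {r : ℕ} (hr : r ≠ 0)
    (hu : u.Coprime p) (t : ℕ) :
    unreducedEulerQuotient p r (u + t * p ^ r) ≡
      unreducedEulerQuotient p r u + (p ^ r).totient * t * u ^ ((p ^ r).totient - 1)
        [MOD p ^ r] := by
  set φ := (p ^ r).totient
  have hbin :
      (u + t * p ^ r) ^ φ ≡ u ^ φ + u ^ (φ - 1) * (t * p ^ r) * φ [MOD p ^ r * p ^ r] := by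
    refine (Nat.modEq_iff_dvd.mpr ?_).symm
    have h := sq_dvd_add_pow_sub_sub ((t * p ^ r : ℕ) : ℤ) (u : ℤ) φ
    push_cast at h ⊢
    refine dvd_trans ⟨(t : ℤ) ^ 2, by ring⟩ (dvd_trans h (dvd_of_eq (by ring)))
  apply Nat.ModEq.mul_left_cancel' (pow_ne_zero r hp.ne_zero)
  apply Nat.ModEq.add_right_cancel' 1
  rw [← pow_totient_eq_mul_unreducedEulerQuotient_add_one hp.ne_one
    ((Nat.coprime_add_mul_pow_left_iff hr u t).mpr hu), mul_add, add_right_comm,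
    ← pow_totient_eq_mul_unreducedEulerQuotient_add_one hp.ne_one hu]
  convert hbin using 2
  ring

theorem levelQuotient_add_mul_pow_s11 (hp : p.Prime) (hodd : Odd p) {r : ℕ} (hr : 2 ≤ r)
    (hu : u.Coprime p) (t : ℕ) :
    levelQuotient p r (u + t * p ^ r) =
      (levelQuotient p r u + (p - 1) * t * u ^ ((p ^ r).totient - 1)) % p := by
  have hr0 : r ≠ 0 := by omega
  rw [levelQuotient_eq hp hodd hr ((Nat.coprime_add_mul_pow_left_iff hr0 u t).mpr hu),
    levelQuotient_eq hp hodd hr hu, Nat.mod_add_mod]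
  refine Nat.div_mod_eq_of_modEq_add_mul (pow_ne_zero _ hp.ne_zero) ?_
  rw [pow_sub_one_mul hr0]
  convert unreducedEulerQuotient_add_mul_pow_modEq hp hr0 hu t using 2
  rw [Nat.totient_prime_pow hp (Nat.pos_of_ne_zero hr0)]
  ring

theorem injOn_levelQuotient_add_mul_pow (hp : p.Prime) (hodd : Odd p) {r : ℕ} (hr : 2 ≤ r)
    (hu : u.Coprime p) : Set.InjOn (fun t => levelQuotient p r (u + t * p ^ r)) (Set.Iio p) := by
  intro t ht t' ht' h
  simp only [levelQuotient_add_mul_pow_s11 hp hodd hr hu] at h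
  set a := (p - 1) * u ^ ((p ^ r).totient - 1)
  have ha : p.gcd a = 1 := by
    refine Nat.Coprime.mul_right ?_ (hu.symm.pow_right _)
    exact (Nat.coprime_self_sub_right hp.one_le).mpr (Nat.coprime_one_right p)
  have hmod : a * t ≡ a * t' [MOD p] := by
    refine Nat.ModEq.add_left_cancel' (levelQuotient p r u) ?_
    simpa only [Nat.ModEq, a, mul_right_comm _ t, mul_right_comm _ t'] using h
  exact (Nat.ModEq.cancel_left_of_coprime ha hmod).eq_of_lt_of_lt ht ht'

theorem exists_levelQuotient_add_mul_pow_eq (hp : p.Prime) (hodd : Odd p) {r l : ℕ}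
    (hr : 2 ≤ r) (hu : u.Coprime p) (hl : l < p) :
    ∃ t < p, levelQuotient p r (u + t * p ^ r) = l := by
  have hmaps : Set.MapsTo (fun t => levelQuotient p r (u + t * p ^ r)) (range p) (range p) :=
    fun t _ => by
      simpa only [mem_coe, mem_range, levelQuotient_add_mul_pow_s11 hp hodd hr hu]
        using Nat.mod_lt _ hp.pos
  have hinj := injOn_levelQuotient_add_mul_pow hp hodd hr hu
  rw [← coe_range] at hinj
  obtain ⟨t, ht, htl⟩ := surjOn_of_injOn_of_card_le _ hmaps hinj le_rfl (mem_range.mpr hl)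
  exact ⟨t, mem_range.mp ht, htl⟩

end EulerQuotient

theorem bijOn_mod_pow_filter_levelQuotient {p r l : ℕ} (hp : p.Prime) (hodd : Odd p)
    (hr : 2 ≤ r) (hl : l < p) :
    Set.BijOn (· % p ^ r)
      ((range (p ^ (r + 1))).filter fun u => u.Coprime p ∧ levelQuotient p r u = l)
      ((range (p ^ r)).filter fun c => c.Coprime p) := by
  have hr0 : r ≠ 0 := by omega
  have hpr : 0 < p ^ r := pow_pos hp.pos r
  have hdecomp (u : ℕ) : u % p ^ r + u / p ^ r * p ^ r = u := Nat.mod_add_div' u _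
  have hcop (u : ℕ) : (u % p ^ r).Coprime p ↔ u.Coprime p := by
    rw [← Nat.coprime_add_mul_pow_left_iff hr0 _ (u / p ^ r), hdecomp]
  have hdiv {u : ℕ} (hu : u < p ^ (r + 1)) : u / p ^ r < p :=
    (Nat.div_lt_iff_lt_mul hpr).mpr (by rwa [← pow_succ'])
  refine ⟨fun u hu => ?_, fun u hu v hv huv => ?_, fun c hc => ?_⟩
  · simp only [mem_coe, mem_filter, mem_range] at hu ⊢
    exact ⟨Nat.mod_lt _ hpr, (hcop u).mpr hu.2.1⟩
  · simp only [mem_coe, mem_filter, mem_range] at hu hv huv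
    have htt := injOn_levelQuotient_add_mul_pow hp hodd hr ((hcop u).mpr hu.2.1)
      (hdiv hu.1) (hdiv hv.1) (by simp only; rw [hdecomp, huv, hdecomp, hu.2.2, hv.2.2])
    rw [← hdecomp u, ← hdecomp v, huv, htt]
  · simp only [mem_coe, mem_filter, mem_range] at hc
    obtain ⟨t, ht, htl⟩ := exists_levelQuotient_add_mul_pow_eq hp hodd hr hc.2 hl
    refine ⟨c + t * p ^ r, ?_, ?_⟩
    · simp only [mem_coe, mem_filter, mem_range]
      refine ⟨?_, (Nat.coprime_add_mul_pow_left_iff hr0 c t).mpr hc.2, htl⟩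
      rw [pow_succ]
      nlinarith
    · simp only [Nat.add_mul_mod_self_right, Nat.mod_eq_of_lt hc.1]

theorem sum_filter_coprime_range_prime_pow {K : Type*} [Field K] [CharP K 2] [DecidableEq K]
    {p r : ℕ}
    (hp : p.Prime) (hodd : Odd p) (hr : r ≠ 0) {θ : K} (hθ : θ ^ p = 1) :
    ∑ c ∈ (range (p ^ r)).filter (fun c => c.Coprime p), θ ^ c = if θ = 1 then 0 else 1 := by
  have hC : (#((range (p ^ r)).filter fun c => c.Coprime p) : K) = 0 := by
    have htot : #((range (p ^ r)).filter fun c => c.Coprime p) = (p ^ r).totient := by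
      rw [Nat.totient_eq_card_coprime]
      congr 1
      refine filter_congr fun c _ => ?_
      rw [Nat.coprime_comm, Nat.coprime_pow_left_iff (Nat.pos_of_ne_zero hr)]
    rw [htot, Nat.totient_prime_pow hp (Nat.pos_of_ne_zero hr), CharTwo.natCast_eq_ite]
    exact if_pos ((Nat.Odd.sub_odd hodd odd_one).mul_left _)
  split_ifs with hθ1
  · simp [hθ1, hC]
  have hθpr : θ ^ p ^ r = 1 :=
    orderOf_dvd_iff_pow_eq_one.mp ((orderOf_dvd_of_pow_eq_one hθ).trans (dvd_pow_self p hr))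
  have hrest : ∑ c ∈ (range (p ^ r)).filter (fun c => ¬ c.Coprime p), θ ^ c = 1 := by
    have hone : ∀ c ∈ (range (p ^ r)).filter (fun c => ¬ c.Coprime p), θ ^ c = 1 := by
      intro c hc
      obtain ⟨d, rfl⟩ := hp.dvd_iff_not_coprime.mpr (fun h => (mem_filter.mp hc).2 h.symm)
      rw [pow_mul, hθ, one_pow]
    have hcard := congrArg (Nat.cast : ℕ → K)
      (card_filter_add_card_filter_not (s := range (p ^ r)) (fun c => c.Coprime p))
    have hpr : ((p ^ r : ℕ) : K) = 1 := by
      rw [CharTwo.natCast_eq_ite]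
      exact if_neg (Nat.not_even_iff_odd.mpr hodd.pow)
    rw [Nat.cast_add, hC, zero_add, card_range, hpr] at hcard
    rw [sum_congr rfl hone, sum_const, nsmul_one, hcard]
  have hall : ∑ c ∈ range (p ^ r), θ ^ c = 0 := by
    rw [geom_sum_eq hθ1, hθpr, sub_self, zero_div]
  rwa [← sum_filter_add_sum_filter_not _ (fun c => c.Coprime p), hrest,
    CharTwo.add_eq_zero] at hall

open Classical in
/-- For `θ` in the algebraic closure of `F₂` with `θ^p = 1`, `Σ_{u ∈ D_l} θ^u`
is `0` if `θ = 1` and `1` otherwise. -/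
theorem sum_Dl_pow_theta_p (p r l : ℕ) (hp : p.Prime) (hodd : Odd p) (hr : 2 ≤ r)
    (hl : l < p) (θ : AlgebraicClosure (ZMod 2)) (h1 : θ ^ p = 1) :
    ∑ u ∈ (Finset.range (p ^ (r + 1))).filter
        (fun u => Nat.Coprime u p ∧ levelQuotient p r u = l), θ ^ u
      = if θ = 1 then 0 else 1 := by
  have hr0 : r ≠ 0 := by omega
  have hθ : θ ^ p ^ r = 1 :=
    orderOf_dvd_iff_pow_eq_one.mp ((orderOf_dvd_of_pow_eq_one h1).trans (dvd_pow_self p hr0))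
  have hbij := bijOn_mod_pow_filter_levelQuotient hp hodd hr hl
  rw [sum_nbij (· % p ^ r) (fun u hu => hbij.mapsTo hu) hbij.injOn hbij.surjOn
    (fun u _ => pow_eq_pow_mod u hθ)]
  exact sum_filter_coprime_range_prime_pow hp hodd hr0 h1
end

section
/- Let p be an odd prime and i ≥ 1. The generalized Fermat quotients of order i satisfy F^{(i)}(v + k p^i) ≡ F^{(i)}(v) − k v^{p−2} (mod p) for all v coprime to p and all integers k. -/
/-!
Since `i ≥ 1`, the binomial theorem gives
`(v + k p^i)^(p-1) ≡ v^(p-1) + (p-1) v^(p-2) k p^i (mod p^(i+1))`. Adding a multiple of `p^i`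
commutes with floor division by `p^i`, so the quotient `(u^(p-1) - 1) / p^i` shifts by
`(p-1) v^(p-2) k ≡ -k v^(p-2)` modulo `p`.
-/

open Classical in
/-- Leeb's Fermat quotient of order `i`: the `i`-th base-`p` digit of `u^{p-1}`,
i.e. `F^{(i)}(u) = (u^{p-1} - 1)/p^i mod p` for `gcd(u,p)=1`, and `0` if `p ∣ u`. -/
noncomputable def fermatQuotientOrder (p i : ℕ) (v : ℤ) : ℤ :=
  if IsCoprime v (p : ℤ) then (v ^ (p - 1) - 1) / (p : ℤ) ^ i % (p : ℤ) else 0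

namespace Int

theorem add_mul_pow_pow_modEq {i : ℕ} (hi : 1 ≤ i) (a v k : ℤ) (n : ℕ) :
    (v + k * a ^ i) ^ n ≡ v ^ n + n * v ^ (n - 1) * k * a ^ i [ZMOD a ^ (i + 1)] := by
  have hsq : a ^ (i + 1) ∣ (k * a ^ i) ^ 2 :=
    (pow_dvd_pow a (by omega : i + 1 ≤ i + i)).trans ⟨k ^ 2, by ring⟩
  obtain ⟨c, hc⟩ := hsq.trans (sq_dvd_add_pow_sub_sub (k * a ^ i) v n)
  exact (Int.modEq_iff_dvd.mpr ⟨c, by linear_combination hc⟩).symm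

theorem ediv_modEq_add_of_modEq_s15 {a b c d m : ℤ} (hd : d ≠ 0)
    (h : a ≡ b + c * d [ZMOD d * m]) : a / d ≡ b / d + c [ZMOD m] := by
  obtain ⟨t, ht⟩ := Int.modEq_iff_dvd.mp h
  have ha : a = b + (c - m * t) * d := by linear_combination -ht
  rw [ha, Int.add_mul_ediv_right _ _ hd]
  exact Int.modEq_iff_dvd.mpr ⟨t, by ring⟩

end Int

theorem fermatQuotientOrder_modEq {p : ℕ} (i : ℕ) {v : ℤ} (hv : IsCoprime v (p : ℤ)) :
    fermatQuotientOrder p i v ≡ (v ^ (p - 1) - 1) / (p : ℤ) ^ i [ZMOD p] := by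
  rw [fermatQuotientOrder, if_pos hv]
  exact Int.mod_modEq _ _

theorem fermatQuotientOrder_shift_general (p i : ℕ) (hp : p.Prime) (hi : 1 ≤ i)
    (v : ℤ) (hv : IsCoprime v (p : ℤ)) (k : ℤ) :
    fermatQuotientOrder p i (v + k * (p : ℤ) ^ i) ≡
      fermatQuotientOrder p i v - k * v ^ (p - 2) [ZMOD p] := by
  have hv' : IsCoprime (v + k * (p : ℤ) ^ i) p := by
    obtain ⟨j, rfl⟩ := Nat.exists_eq_add_of_le' hi
    simpa [pow_succ, mul_assoc] using hv.add_mul_right_left (k * (p : ℤ) ^ j)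
  have hexp : (v + k * (p : ℤ) ^ i) ^ (p - 1) - 1 ≡
      (v ^ (p - 1) - 1) + ((p - 1 : ℕ) * v ^ (p - 2) * k) * (p : ℤ) ^ i
        [ZMOD (p : ℤ) ^ i * p] := by
    rw [← pow_succ]
    convert (Int.add_mul_pow_pow_modEq hi p v k (p - 1)).sub_right 1 using 2
    rw [show p - 1 - 1 = p - 2 by omega]
    ring
  have hcoeff : ((p - 1 : ℕ) : ℤ) ≡ -1 [ZMOD p] := by
    rw [Nat.cast_sub hp.one_le, Nat.cast_one]
    exact Int.modEq_iff_dvd.mpr ⟨-1, by ring⟩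
  calc fermatQuotientOrder p i (v + k * (p : ℤ) ^ i)
      ≡ ((v + k * (p : ℤ) ^ i) ^ (p - 1) - 1) / (p : ℤ) ^ i [ZMOD p] :=
        fermatQuotientOrder_modEq i hv'
    _ ≡ (v ^ (p - 1) - 1) / (p : ℤ) ^ i + (p - 1 : ℕ) * v ^ (p - 2) * k [ZMOD p] :=
        Int.ediv_modEq_add_of_modEq_s15 (pow_ne_zero _ (by exact_mod_cast hp.ne_zero)) hexp
    _ ≡ fermatQuotientOrder p i v + -1 * v ^ (p - 2) * k [ZMOD p] :=
        (fermatQuotientOrder_modEq i hv).symm.add ((hcoeff.mul_right _).mul_right _)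
    _ = fermatQuotientOrder p i v - k * v ^ (p - 2) := by ring

/-- `F^{(i)}(v + k p^i) ≡ F^{(i)}(v) - k v^{p-2} (mod p)`. -/
theorem fermatQuotientOrder_shift (p i : ℕ) (hp : p.Prime) (hodd : Odd p) (hi : 1 ≤ i)
    (v : ℤ) (hv : IsCoprime v (p : ℤ)) (k : ℤ) :
    fermatQuotientOrder p i (v + k * (p : ℤ) ^ i) ≡
      fermatQuotientOrder p i v - k * v ^ (p - 2) [ZMOD p] :=
  fermatQuotientOrder_shift_general p i hp hi v hv k
end
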